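/- arXiv:2210.11413 — 2 statements merged into one kernel-verified Lean document; each statement's English description precedes it below -/
import Mathlib

section
/- Let C ∈ {0,1}^{M×N}, y ∈ {0,1}^N, and define F(x) = −Σ_{m=1}^M (−1)^{C(m,:)·x} + (1/e)(1 + 1/N)^{Σ_n (y(n)−x(n))^2} for x ∈ {0,1}^N. Assume the all-zero vector satisfies all parity checks. Then every minimizer x* of F over {0,1}^N satisfies all parity checks (C x* ≡ 0 mod 2), and among all x satisfying the parity checks, x* minimizes Σ_n (y(n)−x(n))^2. -/
/-! The parity term `-∑ₘ (-1)^{C(m,:)·x}` equals `-M` exactly on the code words and is at least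
`-M + 2` off them, while the distance term `(1/e)(1+1/N)^{d(x)}` always lies in `[1/e, 1)` because
`d(x) ≤ N` and `(1+1/N)^N < e`. Hence the zero code word beats every non-code word, so a minimizer
is a code word; among code words the parity term is constant and `t ↦ (1+1/N)^t` is strictly
increasing, so a minimizer minimizes the distance. -/

/-- The ML parity-check decoding objective
    `F(x) = -∑ₘ (-1)^{C(m,:)·x} + (1/e)(1+1/N)^{∑ₙ(yₙ-xₙ)²}`. -/
noncomputable def F12 (M N : ℕ) (C : Fin M → Fin N → ℕ) (y : Fin N → ℕ)
    (x : Fin N → ℕ) : ℝ :=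
  -(∑ m, (-1 : ℝ) ^ (∑ n, C m n * x n)) +
    (1 / Real.exp 1) *
      Real.rpow (1 + 1 / (N : ℝ)) (∑ n, ((y n : ℝ) - (x n : ℝ)) ^ 2)

open Finset Real

lemma one_add_inv_pow_lt_exp_one {N : ℕ} (hN : 1 ≤ N) : (1 + 1 / (N : ℝ)) ^ N < exp 1 := by
  have hN' : (0 : ℝ) < N := by exact_mod_cast hN
  calc (1 + 1 / (N : ℝ)) ^ N < exp (1 / N) ^ N := by
        gcongr
        linarith [add_one_lt_exp (x := 1 / (N : ℝ)) (by positivity)]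
    _ = exp 1 := by rw [← exp_nat_mul, mul_one_div_cancel hN'.ne']

lemma one_add_inv_rpow_lt_exp_one {N : ℕ} (hN : 1 ≤ N) {t : ℝ} (ht : t ≤ N) :
    (1 + 1 / (N : ℝ)) ^ t < exp 1 := by
  have hb : 1 ≤ 1 + 1 / (N : ℝ) := le_add_of_nonneg_right (by positivity)
  calc (1 + 1 / (N : ℝ)) ^ t ≤ (1 + 1 / (N : ℝ)) ^ (N : ℝ) := rpow_le_rpow_of_exponent_le hb ht
    _ < exp 1 := by rw [rpow_natCast]; exact one_add_inv_pow_lt_exp_one hN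

lemma sum_neg_one_pow_eq_card {ι : Type*} [Fintype ι] {k : ι → ℕ} (hk : ∀ i, Even (k i)) :
    ∑ i, (-1 : ℝ) ^ k i = Fintype.card ι := by
  simp [(hk _).neg_one_pow]

lemma sum_neg_one_pow_le_card_sub_two {ι : Type*} [Fintype ι] [DecidableEq ι] {k : ι → ℕ} {i : ι}
    (hi : Odd (k i)) : ∑ j, (-1 : ℝ) ^ k j ≤ Fintype.card ι - 2 := by
  have hrest : ∑ j ∈ univ.erase i, (-1 : ℝ) ^ k j ≤ Fintype.card ι - 1 := by
    calc ∑ j ∈ univ.erase i, (-1 : ℝ) ^ k j ≤ ∑ _j ∈ univ.erase i, (1 : ℝ) :=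
          sum_le_sum fun j _ => le_of_abs_le (abs_neg_one_pow (k j)).le
      _ = Fintype.card ι - 1 := by
          rw [sum_const, card_erase_of_mem (mem_univ i), card_univ, nsmul_one,
            Nat.cast_sub (Fintype.card_pos_iff.mpr ⟨i⟩), Nat.cast_one]
  rw [← sum_erase_add _ _ (mem_univ i), hi.neg_one_pow]
  linarith

section Decoding

variable {M N : ℕ} (C : Fin M → Fin N → ℕ)

noncomputable def paritySum (x : Fin N → ℕ) : ℝ :=
  ∑ m, (-1 : ℝ) ^ (∑ n, C m n * x n)

noncomputable def sqDist (y x : Fin N → ℕ) : ℝ :=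
  ∑ n, ((y n : ℝ) - (x n : ℝ)) ^ 2

lemma F12_eq (y x : Fin N → ℕ) :
    F12 M N C y x = -paritySum C x + (exp 1)⁻¹ * (1 + 1 / (N : ℝ)) ^ sqDist y x := by
  simp only [F12, paritySum, sqDist, one_div]; rfl

variable {C}

lemma paritySum_of_checks {x : Fin N → ℕ} (hx : ∀ m, (∑ n, C m n * x n) % 2 = 0) :
    paritySum C x = M := by
  simpa [paritySum] using sum_neg_one_pow_eq_card fun m => Nat.even_iff.mpr (hx m)

lemma paritySum_le_of_check_fails {x : Fin N → ℕ} {m : Fin M}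
    (hm : (∑ n, C m n * x n) % 2 ≠ 0) : paritySum C x ≤ M - 2 := by
  simpa [paritySum] using sum_neg_one_pow_le_card_sub_two (k := fun m => ∑ n, C m n * x n)
    (Nat.odd_iff.mpr (Nat.mod_two_ne_zero.mp hm))

lemma sqDist_nonneg (y x : Fin N → ℕ) : 0 ≤ sqDist y x :=
  sum_nonneg fun _ _ => sq_nonneg _

lemma sqDist_le_of_binary {y x : Fin N → ℕ} (hy : ∀ n, y n ≤ 1) (hx : ∀ n, x n ≤ 1) :
    sqDist y x ≤ N := by
  calc sqDist y x ≤ ∑ _n : Fin N, (1 : ℝ) := sum_le_sum fun n _ => by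
        rcases Nat.le_one_iff_eq_zero_or_eq_one.mp (hy n) with h | h <;>
          rcases Nat.le_one_iff_eq_zero_or_eq_one.mp (hx n) with h' | h' <;> norm_num [h, h']
    _ = N := by simp

lemma F12_lt_of_checks (hN : 1 ≤ N) {y x : Fin N → ℕ} (hy : ∀ n, y n ≤ 1) (hx : ∀ n, x n ≤ 1)
    (hcode : ∀ m, (∑ n, C m n * x n) % 2 = 0) : F12 M N C y x < -M + 1 := by
  have hdist : (exp 1)⁻¹ * (1 + 1 / (N : ℝ)) ^ sqDist y x < 1 := by
    rw [inv_mul_lt_iff₀ (exp_pos 1), mul_one]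
    exact one_add_inv_rpow_lt_exp_one hN (sqDist_le_of_binary hy hx)
  rw [F12_eq, paritySum_of_checks hcode]
  linarith

lemma F12_gt_of_check_fails {y x : Fin N → ℕ} {m : Fin M} (hm : (∑ n, C m n * x n) % 2 ≠ 0) :
    -M + 1 < F12 M N C y x := by
  have hdist : (exp 1)⁻¹ ≤ (exp 1)⁻¹ * (1 + 1 / (N : ℝ)) ^ sqDist y x :=
    le_mul_of_one_le_right (inv_pos.mpr (exp_pos 1)).le
      (one_le_rpow (le_add_of_nonneg_right (by positivity)) (sqDist_nonneg y x))
  rw [F12_eq]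
  linarith [paritySum_le_of_check_fails hm, inv_pos.mpr (exp_pos 1)]

end Decoding

theorem stmt_12_general (M N : ℕ) (hN : 1 ≤ N) (C : Fin M → Fin N → ℕ)
    (y : Fin N → ℕ) (hy : ∀ n, y n ≤ 1)
    (xstar : Fin N → ℕ)
    (hmin : ∀ x : Fin N → ℕ, (∀ n, x n ≤ 1) → F12 M N C y xstar ≤ F12 M N C y x) :
    (∀ m, (∑ n, C m n * xstar n) % 2 = 0) ∧
    (∀ x : Fin N → ℕ, (∀ n, x n ≤ 1) → (∀ m, (∑ n, C m n * x n) % 2 = 0) →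
      ∑ n, ((y n : ℝ) - (xstar n : ℝ)) ^ 2 ≤ ∑ n, ((y n : ℝ) - (x n : ℝ)) ^ 2) := by
  have hcode : ∀ m, (∑ n, C m n * xstar n) % 2 = 0 := by
    by_contra! ⟨m, hm⟩
    have hzero := F12_lt_of_checks (C := C) hN hy (fun _ => zero_le_one) (by simp)
    linarith [F12_gt_of_check_fails (y := y) hm, hmin (fun _ => 0) fun _ => zero_le_one]
  refine ⟨hcode, fun x hx hxcode => ?_⟩
  have hle := hmin x hx
  rwa [F12_eq, F12_eq, paritySum_of_checks hcode, paritySum_of_checks hxcode,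
    add_le_add_iff_left, mul_le_mul_iff_of_pos_left (inv_pos.mpr (exp_pos 1)),
    rpow_le_rpow_left_iff (lt_add_of_pos_right 1 (by positivity))] at hle

/-- Every minimizer of `F` over binary vectors satisfies all parity checks, and
    among all binary vectors satisfying the parity checks it minimizes the
    squared distance to `y`. -/
theorem stmt_12 (M N : ℕ) (hN : 1 ≤ N) (C : Fin M → Fin N → ℕ)
    (hC : ∀ m n, C m n ≤ 1) (y : Fin N → ℕ) (hy : ∀ n, y n ≤ 1)
    (h0 : ∀ m, (∑ n, C m n * 0) % 2 = 0)
    (xstar : Fin N → ℕ) (hxstar : ∀ n, xstar n ≤ 1)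
    (hmin : ∀ x : Fin N → ℕ, (∀ n, x n ≤ 1) → F12 M N C y xstar ≤ F12 M N C y x) :
    (∀ m, (∑ n, C m n * xstar n) % 2 = 0) ∧
    (∀ x : Fin N → ℕ, (∀ n, x n ≤ 1) → (∀ m, (∑ n, C m n * x n) % 2 = 0) →
      ∑ n, ((y n : ℝ) - (xstar n : ℝ)) ^ 2 ≤ ∑ n, ((y n : ℝ) - (x n : ℝ)) ^ 2) :=
  stmt_12_general M N hN C y hy xstar hmin
end

section
/- Sign retrieval reduction: for A ∈ ℝ^{M×N} with A^T A invertible and y ∈ ℝ^M, min over s ∈ {±1}^M and x ∈ ℝ^N of ‖D(s)y − Ax‖² equals min over s ∈ {±1}^M of s^T Q s, where Q = D(y)(I − A(A^T A)^{-1}A^T)D(y) and D(v) is the diagonal matrix with diagonal v. The inner minimum over x is attained at x = (A^T A)^{-1} A^T D(y) s. -/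
/-!
For fixed signs `s`, the inner problem is least squares for `v = D(s)y = D(y)s`. The residual at
`x₀ = (AᵀA)⁻¹Aᵀv` is orthogonal to the columns of `A`, so by Pythagoras `x₀` is optimal, with
optimal value `v ⬝ᵥ (v - A x₀) = vᵀ(I - A(AᵀA)⁻¹Aᵀ)v = sᵀQs`. So every value `sᵀQs` is attained
in the joint problem and every value of the joint problem dominates one of them.
-/

open Matrix

section

variable {ι : Type*} [Fintype ι] {R : Type*} [CommRing R]

theorem sum_sub_sq_eq_dotProduct (u w : ι → R) :
    ∑ i, (u i - w i) ^ 2 = (u - w) ⬝ᵥ (u - w) := by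
  simp only [dotProduct, Pi.sub_apply, sq]

theorem diagonal_mulVec_comm [DecidableEq ι] (s y : ι → R) :
    diagonal s *ᵥ y = diagonal y *ᵥ s := by
  ext i
  simp only [mulVec_diagonal, mul_comm]

theorem dotProduct_diagonal_mul_mul_diagonal_mulVec [DecidableEq ι] (P : Matrix ι ι R)
    (s y : ι → R) :
    s ⬝ᵥ ((diagonal y * P * diagonal y) *ᵥ s) =
      (diagonal y *ᵥ s) ⬝ᵥ (P *ᵥ (diagonal y *ᵥ s)) := by
  rw [← mulVec_mulVec, ← mulVec_mulVec, dotProduct_mulVec, ← mulVec_transpose,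
    diagonal_transpose]

end

section NormalEquations

variable {m n : Type*} [Fintype m] [Fintype n]

theorem transpose_mulVec_sub_mulVec_inv_mul_transpose_mulVec [DecidableEq n]
    (A : Matrix m n ℝ) (hA : IsUnit (Aᵀ * A).det) (v : m → ℝ) :
    Aᵀ *ᵥ (v - A *ᵥ (((Aᵀ * A)⁻¹ * Aᵀ) *ᵥ v)) = 0 := by
  rw [mulVec_sub, mulVec_mulVec, mulVec_mulVec, ← Matrix.mul_assoc,
    mul_nonsing_inv _ hA, Matrix.one_mul, sub_self]

variable {R : Type*} [CommRing R] {A : Matrix m n R} {v : m → R} {x₀ : n → R}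

theorem dotProduct_sub_mulVec_mulVec_eq_zero (hx₀ : Aᵀ *ᵥ (v - A *ᵥ x₀) = 0) (z : n → R) :
    (v - A *ᵥ x₀) ⬝ᵥ (A *ᵥ z) = 0 := by
  rw [dotProduct_mulVec, ← mulVec_transpose, hx₀, zero_dotProduct]

theorem dotProduct_self_sub_mulVec_eq_of_transpose_mulVec_eq_zero
    (hx₀ : Aᵀ *ᵥ (v - A *ᵥ x₀) = 0) :
    (v - A *ᵥ x₀) ⬝ᵥ (v - A *ᵥ x₀) = v ⬝ᵥ (v - A *ᵥ x₀) := by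
  rw [sub_dotProduct v, dotProduct_comm (A *ᵥ x₀),
    dotProduct_sub_mulVec_mulVec_eq_zero hx₀, sub_zero]

end NormalEquations

theorem dotProduct_self_sub_mulVec_le_of_transpose_mulVec_eq_zero {m n : Type*} [Fintype m]
    [Fintype n] {A : Matrix m n ℝ} {v : m → ℝ} {x₀ : n → ℝ} (hx₀ : Aᵀ *ᵥ (v - A *ᵥ x₀) = 0)
    (x : n → ℝ) :
    (v - A *ᵥ x₀) ⬝ᵥ (v - A *ᵥ x₀) ≤ (v - A *ᵥ x) ⬝ᵥ (v - A *ᵥ x) := by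
  set r := v - A *ᵥ x₀
  set w := A *ᵥ (x₀ - x)
  have hsplit : v - A *ᵥ x = r + w := by
    simp only [r, w, mulVec_sub]; abel
  have horth : r ⬝ᵥ w = 0 := dotProduct_sub_mulVec_mulVec_eq_zero hx₀ _
  have hw : 0 ≤ w ⬝ᵥ w := by simpa using dotProduct_star_self_nonneg w
  calc r ⬝ᵥ r ≤ r ⬝ᵥ r + w ⬝ᵥ w := le_add_of_nonneg_right hw
    _ = (r + w) ⬝ᵥ (r + w) := by
      rw [add_dotProduct, dotProduct_add, dotProduct_add, dotProduct_comm w r, horth]; ring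
    _ = _ := by rw [hsplit]

/-- Sign retrieval reduction: minimizing `‖D(s)y - Ax‖²` over signs `s` and
    `x ∈ ℝᴺ` equals minimizing `sᵀ Q s` over signs, with
    `Q = D(y)(I - A(AᵀA)⁻¹Aᵀ)D(y)`; the inner minimum over `x` is attained at
    `x = (AᵀA)⁻¹ Aᵀ D(y) s`. -/
theorem stmt_16 (M N : ℕ) (A : Matrix (Fin M) (Fin N) ℝ)
    (hA : IsUnit (Aᵀ * A).det) (y : Fin M → ℝ) :
    sInf {v : ℝ | ∃ (s : Fin M → ℝ) (x : Fin N → ℝ),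
        (∀ m, s m = 1 ∨ s m = -1) ∧
        v = ∑ m, ((diagonal s).mulVec y m - A.mulVec x m) ^ 2} =
    sInf {v : ℝ | ∃ s : Fin M → ℝ, (∀ m, s m = 1 ∨ s m = -1) ∧
        v = s ⬝ᵥ ((diagonal y * (1 - A * (Aᵀ * A)⁻¹ * Aᵀ) * diagonal y).mulVec s)} ∧
    ∀ s : Fin M → ℝ, (∀ m, s m = 1 ∨ s m = -1) →
      ∀ x : Fin N → ℝ,
        ∑ m, ((diagonal s).mulVec y m -
            A.mulVec (((Aᵀ * A)⁻¹ * Aᵀ).mulVec ((diagonal y).mulVec s)) m) ^ 2 ≤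
          ∑ m, ((diagonal s).mulVec y m - A.mulVec x m) ^ 2 := by
  have normal := transpose_mulVec_sub_mulVec_inv_mul_transpose_mulVec A hA
  have optimal : ∀ (s : Fin M → ℝ) (x : Fin N → ℝ),
      ∑ m, ((diagonal s).mulVec y m -
          A.mulVec (((Aᵀ * A)⁻¹ * Aᵀ).mulVec ((diagonal y).mulVec s)) m) ^ 2 ≤
        ∑ m, ((diagonal s).mulVec y m - A.mulVec x m) ^ 2 := by
    intro s x
    simp only [sum_sub_sq_eq_dotProduct, diagonal_mulVec_comm s y]
    exact dotProduct_self_sub_mulVec_le_of_transpose_mulVec_eq_zero (normal _) x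
  have value : ∀ s : Fin M → ℝ,
      s ⬝ᵥ ((diagonal y * (1 - A * (Aᵀ * A)⁻¹ * Aᵀ) * diagonal y).mulVec s) =
        ∑ m, ((diagonal s).mulVec y m -
          A.mulVec (((Aᵀ * A)⁻¹ * Aᵀ).mulVec ((diagonal y).mulVec s)) m) ^ 2 := by
    intro s
    rw [sum_sub_sq_eq_dotProduct, diagonal_mulVec_comm s y,
      dotProduct_self_sub_mulVec_eq_of_transpose_mulVec_eq_zero (normal _),
      dotProduct_diagonal_mul_mul_diagonal_mulVec, sub_mulVec, one_mulVec, Matrix.mul_assoc,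
      ← mulVec_mulVec]
  refine ⟨csInf_eq_csInf_of_forall_exists_le ?_ ?_, fun s _ ↦ optimal s⟩
  · rintro _ ⟨s, x, hs, rfl⟩
    exact ⟨_, ⟨s, hs, rfl⟩, (value s).trans_le (optimal s x)⟩
  · rintro _ ⟨s, hs, rfl⟩
    exact ⟨_, ⟨s, _, hs, value s⟩, le_rfl⟩
end
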